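/- arXiv:2404.04014 — 2 statements merged into one kernel-verified Lean document; each statement's English description precedes it below -/
import Mathlib

section
/- The linear functional π_P summing all coefficients of a formal sum of partitions satisfies π_P ∘ U_x = (1/(1−x)) · π_P ∘ D_x, i.e., for every partition λ, Σ_{ν ≻ λ} x^{|ν/λ|} = (1/(1−x)) Σ_{μ ≺ λ} x^{|λ/μ|} as formal power series in x. -/
/-- A partition, encoded as a weakly decreasing eventually-zero sequence of
natural numbers (`part i` is the `(i+1)`-st part). -/
structure Ptn where
  part : ℕ → ℕ
  anti : Antitone part
  fin : ∃ N, ∀ n, N ≤ n → part n = 0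

namespace Ptn

/-- The number of cells of the skew diagram `lam / mu`. -/
noncomputable def skewSize (lam mu : Ptn) : ℕ := ∑ᶠ i, (lam.part i - mu.part i)

/-- `HStrip mu lam` means `mu ≺ lam`, i.e. `mu ⊆ lam` and the skew diagram
`lam/mu` is a horizontal strip (at most one cell in each column). -/
def HStrip (mu lam : Ptn) : Prop :=
  (∀ i, mu.part i ≤ lam.part i) ∧ ∀ i, lam.part (i + 1) ≤ mu.part i

/-- `VStrip mu lam` means `mu ≺' lam`, i.e. `mu ⊆ lam` and the skew diagram
`lam/mu` is a vertical strip (at most one cell in each row). -/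
def VStrip (mu lam : Ptn) : Prop :=
  (∀ i, mu.part i ≤ lam.part i) ∧ ∀ i, lam.part i ≤ mu.part i + 1

/-- The union `lam ∪ rho` of two Young diagrams. -/
def union (a b : Ptn) : Ptn where
  part i := max (a.part i) (b.part i)
  anti := fun _ _ h => max_le_max (a.anti h) (b.anti h)
  fin := by
    obtain ⟨N, hN⟩ := a.fin
    obtain ⟨M, hM⟩ := b.fin
    exact ⟨max N M, fun n hn => by
      show max (a.part n) (b.part n) = 0
      rw [hN n (le_trans (le_max_left _ _) hn), hM n (le_trans (le_max_right _ _) hn)]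
      rfl⟩

/-- The intersection `lam ∩ rho` of two Young diagrams. -/
def inter (a b : Ptn) : Ptn where
  part i := min (a.part i) (b.part i)
  anti := fun _ _ h => min_le_min (a.anti h) (b.anti h)
  fin := by
    obtain ⟨N, hN⟩ := a.fin
    exact ⟨N, fun n hn => by
      show min (a.part n) (b.part n) = 0
      simp [hN n hn]⟩

/-- The empty partition. -/
def empty : Ptn := ⟨fun _ => 0, fun _ _ _ => le_refl 0, ⟨0, fun _ _ => rfl⟩⟩

/-- The conjugate partition: `(conj lam).part j` is the length of column `j`. -/
noncomputable def conj (lam : Ptn) : Ptn where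
  part j := Set.ncard {i | j < lam.part i}
  anti := by
    intro j k h
    apply Set.ncard_le_ncard
    · intro i hi
      exact lt_of_le_of_lt h hi
    · obtain ⟨N, hN⟩ := lam.fin
      apply Set.Finite.subset (Set.finite_Iio N)
      intro i hi
      by_contra hc
      have hNi : N ≤ i := not_lt.mp (fun h => hc (Set.mem_Iio.mpr h))
      rw [Set.mem_setOf_eq, hN i hNi] at hi
      exact Nat.not_lt_zero j hi
  fin := by
    refine ⟨lam.part 0, fun n hn => ?_⟩
    have h : {i | n < lam.part i} = (∅ : Set ℕ) := by
      ext i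
      simp only [Set.mem_setOf_eq, Set.mem_empty_iff_false, iff_false, not_lt]
      exact le_trans (lam.anti (Nat.zero_le i)) hn
    show Set.ncard {i | n < lam.part i} = 0
    rw [h, Set.ncard_empty]

theorem ext' {a b : Ptn} (h : a.part = b.part) : a = b := by
  cases a; cases b; simpa using h

theorem skewSize_eq_sum (a b : Ptn) {N : ℕ} (h : ∀ n, N ≤ n → a.part n = 0) :
    skewSize a b = ∑ i ∈ Finset.range N, (a.part i - b.part i) := by
  apply finsum_eq_sum_of_support_subset
  intro i hi
  simp only [Function.mem_support] at hi
  simp only [Finset.coe_range, Set.mem_Iio]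
  by_contra hc
  push_neg at hc
  rw [h i hc] at hi
  simp at hi

/-- the partition `μ` with `μ_i = λ_i + λ_{i+1} - ν_{i+1}` -/
def down (lam ν : Ptn) (h : HStrip lam ν) : Ptn where
  part i := lam.part i + lam.part (i + 1) - ν.part (i + 1)
  anti := by
    apply antitone_nat_of_succ_le
    intro i
    have h1 := h.1 (i + 1 + 1)
    have h2 := h.2 i
    omega
  fin := by
    obtain ⟨N, hN⟩ := lam.fin
    exact ⟨N, fun n hn => by
      have := hN n hn
      have := hN (n + 1) (by omega)
      omega⟩

/-- the partition `ν` with `ν_0 = λ_0 + c`, `ν_{i+1} = λ_i + λ_{i+1} - μ_i` -/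
def up (lam mu : Ptn) (c : ℕ) (h : HStrip mu lam) : Ptn where
  part n := match n with
    | 0 => lam.part 0 + c
    | i + 1 => lam.part i + lam.part (i + 1) - mu.part i
  anti := by
    apply antitone_nat_of_succ_le
    intro n
    match n with
    | 0 =>
      have h2 := h.2 0
      simp only []
      omega
    | i + 1 =>
      have h2 := h.2 (i + 1)
      have h1 := h.1 i
      simp only []
      omega
  fin := by
    obtain ⟨N, hN⟩ := lam.fin
    refine ⟨N + 1, fun n hn => ?_⟩
    match n, hn with
    | i + 1, hn =>
      have := hN i (by omega)
      have := hN (i + 1) (by omega)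
      simp only []
      omega

theorem hstrip_down (lam ν : Ptn) (h : HStrip lam ν) : HStrip (down lam ν h) lam := by
  constructor
  · intro i
    have := h.1 (i + 1)
    show lam.part i + lam.part (i + 1) - ν.part (i + 1) ≤ lam.part i
    omega
  · intro i
    have := h.2 i
    show lam.part (i + 1) ≤ lam.part i + lam.part (i + 1) - ν.part (i + 1)
    omega

theorem hstrip_up (lam mu : Ptn) (c : ℕ) (h : HStrip mu lam) :
    HStrip lam (up lam mu c h) := by
  constructor
  · intro i
    match i with
    | 0 => show lam.part 0 ≤ lam.part 0 + c; omega
    | i + 1 =>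
      have := h.1 i
      show lam.part (i + 1) ≤ lam.part i + lam.part (i + 1) - mu.part i
      omega
  · intro i
    have := h.2 i
    show lam.part i + lam.part (i + 1) - mu.part i ≤ lam.part i
    omega

theorem size_down (lam ν : Ptn) (h : HStrip lam ν) {N : ℕ}
    (hN : ∀ n, N ≤ n → lam.part n = 0) :
    skewSize ν lam = (ν.part 0 - lam.part 0) + skewSize lam (down lam ν h) := by
  have hν : ∀ n, N + 1 ≤ n → ν.part n = 0 := by
    intro n hn
    match n, hn with
    | i + 1, hn =>
      have := h.2 i
      have := hN i (by omega)
      omega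
  rw [skewSize_eq_sum ν lam hν, skewSize_eq_sum lam (down lam ν h) hN,
    Finset.sum_range_succ']
  rw [add_comm]
  congr 1
  apply Finset.sum_congr rfl
  intro i _
  have h1 := h.1 (i + 1)
  have h2 := h.2 i
  show ν.part (i + 1) - lam.part (i + 1) =
    lam.part i - (lam.part i + lam.part (i + 1) - ν.part (i + 1))
  omega

theorem size_up (lam mu : Ptn) (c : ℕ) (h : HStrip mu lam) {N : ℕ}
    (hN : ∀ n, N ≤ n → lam.part n = 0) :
    skewSize (up lam mu c h) lam = c + skewSize lam mu := by
  have hup : ∀ n, N + 1 ≤ n → (up lam mu c h).part n = 0 := by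
    intro n hn
    match n, hn with
    | i + 1, hn =>
      have := hN i (by omega)
      have := hN (i + 1) (by omega)
      show lam.part i + lam.part (i + 1) - mu.part i = 0
      omega
  rw [skewSize_eq_sum (up lam mu c h) lam hup, skewSize_eq_sum lam mu hN,
    Finset.sum_range_succ']
  have h0 : (up lam mu c h).part 0 - lam.part 0 = c := by
    show lam.part 0 + c - lam.part 0 = c; omega
  rw [h0, add_comm]
  congr 1
  apply Finset.sum_congr rfl
  intro i _
  have h1 := h.1 i
  have h2 := h.2 i
  show lam.part i + lam.part (i + 1) - mu.part i - lam.part (i + 1) =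
    lam.part i - mu.part i
  omega

theorem finite_lower (lam : Ptn) (p : Ptn → Prop) :
    Finite {mu : Ptn // HStrip mu lam ∧ p mu} := by
  obtain ⟨N, hN⟩ := lam.fin
  apply Finite.of_injective
    (fun m : {mu : Ptn // HStrip mu lam ∧ p mu} =>
      (fun i : Fin N => (⟨m.1.part i, by
        have h1 := m.2.1.1 (i : ℕ)
        have h2 := lam.anti (Nat.zero_le (i : ℕ))
        omega⟩ : Fin (lam.part 0 + 1))))
  intro a b hab
  apply Subtype.ext
  apply ext'
  funext n
  by_cases hn : n < N
  · have := congrFun hab ⟨n, hn⟩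
    simpa using this
  · have ha := a.2.1.1 n
    have hb := b.2.1.1 n
    have := hN n (by omega)
    omega

theorem card_eq_card_le (lam : Ptn) (k : ℕ) :
    Nat.card {ν : Ptn // HStrip lam ν ∧ skewSize ν lam = k}
      = Nat.card {mu : Ptn // HStrip mu lam ∧ skewSize lam mu ≤ k} := by
  obtain ⟨N, hN⟩ := lam.fin
  apply Nat.card_congr
  refine ⟨fun ν => ⟨down lam ν.1 ν.2.1, hstrip_down lam ν.1 ν.2.1, ?_⟩,
    fun m => ⟨up lam m.1 (k - skewSize lam m.1) m.2.1, hstrip_up _ _ _ _, ?_⟩, ?_, ?_⟩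
  · have := size_down lam ν.1 ν.2.1 hN
    have hk := ν.2.2
    omega
  · rw [size_up lam m.1 _ m.2.1 hN]
    have := m.2.2
    omega
  · rintro ⟨ν, hs, hk⟩
    apply Subtype.ext
    apply ext'
    funext n
    have hsz := size_down lam ν hs hN
    match n with
    | 0 =>
      show lam.part 0 + (k - skewSize lam (down lam ν hs)) = ν.part 0
      have := hs.1 0
      omega
    | i + 1 =>
      show lam.part i + lam.part (i + 1) -
        (lam.part i + lam.part (i + 1) - ν.part (i + 1)) = ν.part (i + 1)
      have h1 := hs.1 (i + 1)
      have h2 := hs.2 i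
      omega
  · rintro ⟨m, hs, hk⟩
    apply Subtype.ext
    apply ext'
    funext i
    show lam.part i + lam.part (i + 1) -
      (lam.part i + lam.part (i + 1) - m.part i) = m.part i
    have h1 := hs.1 i
    have h2 := hs.2 i
    omega

theorem card_le_eq_sum (lam : Ptn) (k : ℕ) :
    Nat.card {mu : Ptn // HStrip mu lam ∧ skewSize lam mu ≤ k}
      = ∑ j ∈ Finset.range (k + 1),
          Nat.card {mu : Ptn // HStrip mu lam ∧ skewSize lam mu = j} := by
  have hfin : ∀ p : Ptn → Prop, ({mu : Ptn | HStrip mu lam ∧ p mu}).Finite := by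
    intro p
    rw [← Set.finite_coe_iff]
    exact finite_lower lam p
  have hcard : ∀ p : Ptn → Prop,
      Nat.card {mu : Ptn // HStrip mu lam ∧ p mu}
        = ({mu : Ptn | HStrip mu lam ∧ p mu}).ncard := fun p =>
    Nat.card_coe_set_eq _
  induction k with
  | zero =>
    rw [Finset.sum_range_one, hcard, hcard]
    congr 1
    ext mu
    simp [Nat.le_zero]
  | succ k ih =>
    rw [Finset.sum_range_succ, ← ih, hcard, hcard, hcard]
    have hsplit : {mu : Ptn | HStrip mu lam ∧ skewSize lam mu ≤ k + 1}
        = {mu : Ptn | HStrip mu lam ∧ skewSize lam mu ≤ k}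
          ∪ {mu : Ptn | HStrip mu lam ∧ skewSize lam mu = k + 1} := by
      ext mu
      simp only [Set.mem_setOf_eq, Set.mem_union]
      constructor
      · rintro ⟨h1, h2⟩
        rcases Nat.lt_or_ge (skewSize lam mu) (k + 1) with h | h
        · exact Or.inl ⟨h1, by omega⟩
        · exact Or.inr ⟨h1, by omega⟩
      · rintro (⟨h1, h2⟩ | ⟨h1, h2⟩) <;> exact ⟨h1, by omega⟩
    rw [hsplit, Set.ncard_union_eq ?_ (hfin _) (hfin _)]
    rw [Set.disjoint_left]
    rintro mu ⟨_, h1⟩ ⟨_, h2⟩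
    omega


end Ptn

open Ptn in
/-- The projection identity `π_P ∘ U_x = (1/(1-x)) ⬝ π_P ∘ D_x`: for every
partition `lam`, `Σ_{ν ≻ lam} x^{|ν/lam|} = (1/(1-x)) Σ_{μ ≺ lam} x^{|lam/μ|}`
as formal power series in `x`. -/
theorem projection_all_partitions (lam : Ptn) :
    (PowerSeries.mk fun k =>
        (Nat.card {ν : Ptn // HStrip lam ν ∧ skewSize ν lam = k} : ℚ)) =
      (1 - PowerSeries.X)⁻¹ *
        PowerSeries.mk (fun k =>
          (Nat.card {mu : Ptn // HStrip mu lam ∧ skewSize lam mu = k} : ℚ)) := by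
  have hgeo : ((1 : PowerSeries ℚ) - PowerSeries.X)⁻¹ = PowerSeries.mk 1 := by
    rw [PowerSeries.inv_eq_iff_mul_eq_one (by simp)]
    exact PowerSeries.mk_one_mul_one_sub_eq_one ℚ
  rw [hgeo]
  ext k
  rw [PowerSeries.coeff_mul, PowerSeries.coeff_mk,
    Finset.Nat.sum_antidiagonal_eq_sum_range_succ_mk]
  simp only [PowerSeries.coeff_mk, Pi.one_apply, one_mul]
  rw [card_eq_card_le, card_le_eq_sum]
  push_cast
  rw [← Finset.sum_range_reflect]
  apply Finset.sum_congr rfl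
  intro j hj
  simp only [Finset.mem_range] at hj
  have h : k + 1 - 1 - j = k - j := by omega
  rw [h]
end

section
/- Let λ have Frobenius notation (a₁,…,a_l | b₁,…,b_l). There exists a 1-asymmetric partition ν with λ ≺ ν if and only if there exists a 1-asymmetric partition μ with μ ≺' λ, and both are equivalent to the interlacing condition b₁ ≥ a₁ ≥ b₂ ≥ a₂ ≥ … ≥ b_l ≥ a_l. Moreover, when this condition holds, |{i : a_{i−1} > b_i > a_i}| = |{i : b_{i+1} < a_i < b_i}| (with a₀ = ∞, b_{l+1} = −1). -/
namespace Ptn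

/-- A partition is `1`-asymmetric if its Frobenius notation is
`(a₁,…,a_l | a₁+1,…,a_l+1)`, i.e. on the Durfee square each column exceeds the
corresponding row by one: `lam'_i = lam_i + 1`. -/
def Asym1 (lam : Ptn) : Prop := ∀ i, i < lam.part i → (conj lam).part i = lam.part i + 1

/-- A partition is `(-1)`-asymmetric if its Frobenius notation is
`(a₁+1,…,a_l+1 | a₁,…,a_l)`, i.e. on the Durfee square each row exceeds the
corresponding column by one: `lam_i = lam'_i + 1`. -/
def AsymNeg1 (lam : Ptn) : Prop := ∀ i, i < lam.part i → lam.part i = (conj lam).part i + 1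

end Ptn

namespace Ptn

/-- The size of the Durfee square of a partition. -/
noncomputable def durfee (lam : Ptn) : ℕ := Set.ncard {i | i < lam.part i}

/-- Frobenius arm coordinate: `a_i = lam_i - i` (1-indexed, for `1 ≤ i ≤ durfee`). -/
def frobA (lam : Ptn) (i : ℕ) : ℤ := (lam.part (i - 1) : ℤ) - (i : ℤ)

/-- Frobenius leg coordinate: `b_i = lam'_i - i` (1-indexed, for `1 ≤ i ≤ durfee`). -/
noncomputable def frobB (lam : Ptn) (i : ℕ) : ℤ := ((conj lam).part (i - 1) : ℤ) - (i : ℤ)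

/-- The interlacing condition `b₁ ≥ a₁ ≥ b₂ ≥ a₂ ≥ ⋯ ≥ b_l ≥ a_l` on the
Frobenius coordinates of a partition. -/
noncomputable def Interlaces (lam : Ptn) : Prop :=
  (∀ i, 1 ≤ i → i ≤ durfee lam → frobA lam i ≤ frobB lam i) ∧
  (∀ i, 1 ≤ i → i + 1 ≤ durfee lam → frobB lam (i + 1) ≤ frobA lam i)

end Ptn

namespace Ptn

lemma ncard_Iio (n : ℕ) : (Set.Iio n).ncard = n := by
  rw [← Finset.coe_Iio, Set.ncard_coe_finset, Nat.card_Iio]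

lemma lower_finite_eq_Iio {S : Set ℕ} (hfin : S.Finite)
    (hlow : ∀ ⦃i j : ℕ⦄, j ≤ i → i ∈ S → j ∈ S) : S = Set.Iio S.ncard := by
  have : ∃ n, S = Set.Iio n := by
    rcases S.eq_empty_or_nonempty with h | h
    · refine ⟨0, by rw [h]; ext i; simp⟩
    · have hmem : sSup S ∈ S := Set.Nonempty.csSup_mem h hfin
      refine ⟨sSup S + 1, ?_⟩
      ext i
      simp only [Set.mem_Iio]
      constructor
      · intro hi
        have := le_csSup hfin.bddAbove hi
        omega
      · intro hi
        exact hlow (by omega : i ≤ sSup S) hmem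
  obtain ⟨n, hn⟩ := this
  rw [hn, ncard_Iio]

lemma conj_lt_iff (lam : Ptn) (k i : ℕ) : i < (conj lam).part k ↔ k < lam.part i := by
  have hfin : {i | k < lam.part i}.Finite := by
    obtain ⟨N, hN⟩ := lam.fin
    apply Set.Finite.subset (Set.finite_Iio N)
    intro i hi
    by_contra hc
    have hNi : N ≤ i := not_lt.mp (fun h => hc (Set.mem_Iio.mpr h))
    rw [Set.mem_setOf_eq, hN i hNi] at hi
    exact Nat.not_lt_zero k hi
  have h := lower_finite_eq_Iio hfin
    (fun i j hji hi => lt_of_lt_of_le hi (lam.anti hji))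
  show i < Set.ncard {i | k < lam.part i} ↔ _
  constructor
  · intro hi
    have : i ∈ Set.Iio (Set.ncard {i | k < lam.part i}) := hi
    rw [← h] at this
    exact this
  · intro hi
    have : i ∈ {i | k < lam.part i} := hi
    rw [h] at this
    exact this

lemma eq_of_lt_iff {x y : ℕ} (h : ∀ i, i < x ↔ i < y) : x = y := by
  rcases lt_trichotomy x y with h' | h' | h'
  · exact absurd ((h x).mpr h') (lt_irrefl x)
  · exact h'
  · exact absurd ((h y).mp h') (lt_irrefl y)

lemma le_of_lt_imp {x y : ℕ} (h : ∀ i, i < x → i < y) : x ≤ y := by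
  rcases Nat.eq_zero_or_pos x with h0 | h0
  · omega
  · have := h (x - 1) (by omega)
    omega

lemma conj_conj_part (lam : Ptn) (k : ℕ) : (conj (conj lam)).part k = lam.part k :=
  eq_of_lt_iff fun i => (conj_lt_iff _ _ _).trans (conj_lt_iff _ _ _)

lemma durfee_lt_iff (lam : Ptn) (k : ℕ) : k < durfee lam ↔ k < lam.part k := by
  have hfin : {i | i < lam.part i}.Finite := by
    obtain ⟨N, hN⟩ := lam.fin
    apply Set.Finite.subset (Set.finite_Iio N)
    intro i hi
    by_contra hc
    have hNi : N ≤ i := not_lt.mp (fun h => hc (Set.mem_Iio.mpr h))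
    rw [Set.mem_setOf_eq, hN i hNi] at hi
    exact Nat.not_lt_zero i hi
  have h := lower_finite_eq_Iio hfin (by
    intro i j hji hi
    simp only [Set.mem_setOf_eq] at *
    have := lam.anti hji
    omega)
  show k < Set.ncard {i | i < lam.part i} ↔ _
  constructor
  · intro hk
    have : k ∈ Set.Iio (Set.ncard {i | i < lam.part i}) := hk
    rw [← h] at this; exact this
  · intro hk
    have : k ∈ {i | i < lam.part i} := hk
    rw [h] at this; exact this

lemma durfee_le_part (lam : Ptn) {k : ℕ} (hk : k < durfee lam) :
    durfee lam ≤ lam.part k := by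
  set l := durfee lam
  have h1 : l - 1 < lam.part (l - 1) := (durfee_lt_iff lam _).mp (by omega)
  have h2 : lam.part (l - 1) ≤ lam.part k := lam.anti (by omega)
  omega

lemma durfee_conj_lt_iff (lam : Ptn) (k : ℕ) : k < durfee lam ↔ k < (conj lam).part k := by
  rw [durfee_lt_iff, conj_lt_iff]

lemma durfee_le_conj_part (lam : Ptn) {k : ℕ} (hk : k < durfee lam) :
    durfee lam ≤ (conj lam).part k := by
  set l := durfee lam
  have h1 : l - 1 < (conj lam).part (l - 1) := (durfee_conj_lt_iff lam _).mp (by omega)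
  have h2 : (conj lam).part (l - 1) ≤ (conj lam).part k := (conj lam).anti (by omega)
  omega

lemma part_le_durfee (lam : Ptn) {k : ℕ} (hk : durfee lam ≤ k) :
    lam.part k ≤ durfee lam := by
  set l := durfee lam
  have h1 : ¬ (l < lam.part l) := by
    rw [← durfee_lt_iff]; omega
  have h2 : lam.part k ≤ lam.part l := lam.anti hk
  omega

lemma conj_mono {a b : Ptn} (h : ∀ i, a.part i ≤ b.part i) (k : ℕ) :
    (conj a).part k ≤ (conj b).part k := by
  apply le_of_lt_imp
  intro i hi
  rw [conj_lt_iff] at *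
  exact lt_of_lt_of_le hi (h i)


lemma conj_union_part (a b : Ptn) (k : ℕ) :
    (conj (union a b)).part k = max ((conj a).part k) ((conj b).part k) := by
  apply eq_of_lt_iff
  intro i
  rw [lt_max_iff, conj_lt_iff, conj_lt_iff, conj_lt_iff]
  show k < max (a.part i) (b.part i) ↔ _
  rw [lt_max_iff]

lemma interlaces_iff (lam : Ptn) : Interlaces lam ↔
    ((∀ k, k < durfee lam → lam.part k ≤ (conj lam).part k) ∧
     (∀ k, k + 2 ≤ durfee lam → (conj lam).part (k + 1) ≤ lam.part k + 1)) := by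
  unfold Interlaces frobA frobB
  constructor
  · rintro ⟨h1, h2⟩
    constructor
    · intro k hk
      have := h1 (k + 1) (by omega) (by omega)
      simp only [Nat.add_sub_cancel] at this
      omega
    · intro k hk
      have := h2 (k + 1) (by omega) (by omega)
      simp only [Nat.add_sub_cancel] at this
      omega
  · rintro ⟨h1, h2⟩
    constructor
    · intro i hi hil
      obtain ⟨k, rfl⟩ : ∃ k, i = k + 1 := ⟨i - 1, by omega⟩
      have := h1 k (by omega)
      simp only [Nat.add_sub_cancel]
      omega
    · intro i hi hil
      obtain ⟨k, rfl⟩ : ∃ k, i = k + 1 := ⟨i - 1, by omega⟩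
      have := h2 k (by omega)
      simp only [Nat.add_sub_cancel]
      omega

lemma dirA (lam : Ptn) (h : ∃ ν : Ptn, Asym1 ν ∧ HStrip lam ν) : Interlaces lam := by
  obtain ⟨ν, hA, hsub, hstrip⟩ := h
  rw [interlaces_iff]
  have f1 : ∀ k, (conj lam).part k ≤ (conj ν).part k := conj_mono hsub
  have f2 : ∀ k, (conj ν).part k ≤ (conj lam).part k + 1 := by
    intro k
    have key : ∀ i, i < (conj ν).part k → i ≤ (conj lam).part k := by
      intro i hi
      rw [conj_lt_iff] at hi
      match i with
      | 0 => omega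
      | j + 1 =>
        have : k < lam.part j := lt_of_lt_of_le hi (hstrip j)
        have := (conj_lt_iff lam k j).mpr this
        omega
    by_contra hc
    have := key ((conj lam).part k + 1) (by omega)
    omega
  constructor
  · intro k hk
    have hkν : k < ν.part k := lt_of_lt_of_le ((durfee_lt_iff lam k).mp hk) (hsub k)
    have h1 := hA k hkν
    have h2 := f2 k
    have h3 := hsub k
    omega
  · intro k hk
    have hkν : k + 1 < ν.part (k + 1) :=
      lt_of_lt_of_le ((durfee_lt_iff lam (k + 1)).mp (by omega)) (hsub (k + 1))
    have h1 := hA (k + 1) hkν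
    have h2 := hstrip k
    have h3 := f1 (k + 1)
    omega

lemma dirB (lam : Ptn) (h : ∃ mu : Ptn, Asym1 mu ∧ VStrip mu lam) : Interlaces lam := by
  obtain ⟨mu, hA, hsub, hstrip⟩ := h
  rw [interlaces_iff]
  have f1 : ∀ k, (conj mu).part k ≤ (conj lam).part k := conj_mono hsub
  have f3 : ∀ k, (conj lam).part (k + 1) ≤ (conj mu).part k := by
    intro k
    apply le_of_lt_imp
    intro i hi
    rw [conj_lt_iff] at *
    have := hstrip i
    omega
  constructor
  · intro k hk
    have hcl : k < (conj lam).part k := (durfee_conj_lt_iff lam k).mp hk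
    by_cases hd : k < mu.part k
    · have h1 := hA k hd
      have h2 := hstrip k
      have h3 := f1 k
      omega
    · have h2 := hstrip k
      omega
  · intro k hk
    have hk1 : k + 1 < lam.part (k + 1) := (durfee_lt_iff lam (k + 1)).mp (by omega)
    have hlk : k + 2 ≤ lam.part k := le_trans hk1 (lam.anti (by omega))
    by_cases hd : k < mu.part k
    · have h1 := hA k hd
      have h3 := f3 k
      have h4 := hsub k
      omega
    · have h2 := hstrip k
      omega

lemma dirA' (lam : Ptn) (h : Interlaces lam) : ∃ ν : Ptn, Asym1 ν ∧ HStrip lam ν := by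
  rw [interlaces_iff] at h
  obtain ⟨h1, h2⟩ := h
  set l := durfee lam with hl
  have hlge : ∀ k, k < l → l ≤ lam.part k := fun k hk => durfee_le_part lam hk
  have hcge : ∀ k, k < l → l ≤ (conj lam).part k := fun k hk => durfee_le_conj_part lam hk
  have hple : ∀ k, l ≤ k → lam.part k ≤ l := fun k hk => part_le_durfee lam hk
  set Df : ℕ → ℕ := fun k => if k < l then max (lam.part k + 1) ((conj lam).part k) else 0
    with hDf
  set Af : ℕ → ℕ := fun k => if k < l then max (lam.part k) ((conj lam).part k - 1) else 0
    with hAf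
  obtain ⟨D, hD⟩ : ∃ D : Ptn, ∀ k, D.part k = Df k := by
    refine ⟨⟨Df, antitone_nat_of_succ_le ?_, l, fun n hn => ?_⟩, fun _ => rfl⟩
    · intro k
      have e1 := lam.anti ((Nat.le_add_right k 1))
      have e2 := (conj lam).anti ((Nat.le_add_right k 1))
      simp only [hDf]
      split_ifs <;> omega
    · simp only [hDf]
      split_ifs <;> omega
  obtain ⟨A, hA⟩ : ∃ A : Ptn, ∀ k, A.part k = Af k := by
    refine ⟨⟨Af, antitone_nat_of_succ_le ?_, l, fun n hn => ?_⟩, fun _ => rfl⟩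
    · intro k
      have e1 := lam.anti ((Nat.le_add_right k 1))
      have e2 := (conj lam).anti ((Nat.le_add_right k 1))
      simp only [hAf]
      split_ifs <;> omega
    · simp only [hAf]
      split_ifs <;> omega
  have hconjD_le : ∀ k, (conj D).part k ≤ l := by
    intro k
    apply le_of_lt_imp
    intro i hi
    rw [conj_lt_iff, hD] at hi
    by_contra hc
    simp only [hDf, if_neg (by omega : ¬ i < l)] at hi
    omega
  have hconjA_le : ∀ k, (conj A).part k ≤ l := by
    intro k
    apply le_of_lt_imp
    intro i hi
    rw [conj_lt_iff, hA] at hi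
    by_contra hc
    simp only [hAf, if_neg (by omega : ¬ i < l)] at hi
    omega
  refine ⟨union A (conj D), ?_, ?_, ?_⟩
  · -- Asym1
    intro k hk
    have hν : ∀ j, (union A (conj D)).part j = max (A.part j) ((conj D).part j) :=
      fun _ => rfl
    rw [hν] at hk ⊢
    by_cases hkl : k < l
    · have hAval : A.part k = max (lam.part k) ((conj lam).part k - 1) := by
        rw [hA]; simp only [hDf, hAf, if_pos hkl]
      have hAge : l ≤ A.part k := by
        have := hlge k hkl; omega
      have hνk : max (A.part k) ((conj D).part k) = A.part k := by
        have := hconjD_le k; omega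
      rw [hνk]
      rw [conj_union_part]
      have hcc : (conj (conj D)).part k = D.part k := conj_conj_part D k
      rw [hcc, hD]
      have hDval : Df k = max (lam.part k + 1) ((conj lam).part k) := by
        simp only [hDf, if_pos hkl]
      have hcge' := hcge k hkl
      have hconjA' := hconjA_le k
      have hcpos : 1 ≤ (conj lam).part k := by omega
      rw [hDval, hAval]
      omega
    · exfalso
      have : A.part k = 0 := by rw [hA]; simp only [hAf, if_neg hkl]
      have := hconjD_le k
      omega
  · -- containment
    intro k
    show lam.part k ≤ max (A.part k) ((conj D).part k)
    by_cases hkl : k < l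
    · have : lam.part k ≤ A.part k := by
        rw [hA]; simp only [hAf, if_pos hkl]; omega
      omega
    · have : lam.part k ≤ (conj D).part k := by
        apply le_of_lt_imp
        intro j hj
        rw [conj_lt_iff, hD]
        have hjl : j < l := lt_of_lt_of_le hj (hple k (by omega))
        have : k < (conj lam).part j := (conj_lt_iff lam j k).mpr hj
        simp only [hDf, if_pos hjl]
        omega
      omega
  · -- rows condition
    intro k
    show max (A.part (k+1)) ((conj D).part (k+1)) ≤ lam.part k
    have e1 : A.part (k+1) ≤ lam.part k := by
      rw [hA]
      by_cases hkl : k + 1 < l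
      · have := h2 k (by omega)
        have := lam.anti ((Nat.le_add_right k 1))
        simp only [hAf, if_pos hkl]
        omega
      · simp only [hAf, if_neg hkl]; omega
    have e2 : (conj D).part (k+1) ≤ lam.part k := by
      apply le_of_lt_imp
      intro j hj
      rw [conj_lt_iff, hD] at hj
      have hjl : j < l := by
        by_contra hc
        simp only [hDf, if_neg hc] at hj
        omega
      have hline := h1 j hjl
      have : k < (conj lam).part j := by
        simp only [hDf, if_pos hjl] at hj
        omega
      exact (conj_lt_iff lam j k).mp this
    omega

lemma dirB' (lam : Ptn) (h : Interlaces lam) : ∃ mu : Ptn, Asym1 mu ∧ VStrip mu lam := by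
  rw [interlaces_iff] at h
  obtain ⟨h1, h2⟩ := h
  set l := durfee lam with hl
  have hlge : ∀ k, k < l → l ≤ lam.part k := fun k hk => durfee_le_part lam hk
  have hcge : ∀ k, k < l → l ≤ (conj lam).part k := fun k hk => durfee_le_conj_part lam hk
  have hple : ∀ k, l ≤ k → lam.part k ≤ l := fun k hk => part_le_durfee lam hk
  set m : ℕ := if (conj lam).part (l - 1) ≤ l then l - 1 else l with hm_def
  have hm1 : m ≤ l := by rw [hm_def]; split_ifs <;> omega
  have hcm1 : ∀ k, k < m → m + 1 ≤ (conj lam).part k := by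
    intro k hk
    by_cases hb : (conj lam).part (l - 1) ≤ l
    · have hm : m = l - 1 := by rw [hm_def, if_pos hb]
      have := hcge k (by omega)
      omega
    · have hm : m = l := by rw [hm_def, if_neg hb]
      have e := (conj lam).anti (show k ≤ l - 1 by omega)
      omega
  have hlam_m : ∀ k, m ≤ k → lam.part k ≤ l ∧ lam.part k ≤ m + 1 := by
    intro k hk
    by_cases hb : (conj lam).part (l - 1) ≤ l
    · have hm : m = l - 1 := by rw [hm_def, if_pos hb]
      rcases Nat.eq_zero_or_pos l with h0 | h0
      · have := hple k (by omega); omega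
      · have e1 : lam.part (l - 1) ≤ (conj lam).part (l - 1) := h1 (l - 1) (by omega)
        have e2 : lam.part k ≤ lam.part (l - 1) := lam.anti (by omega)
        omega
    · have hm : m = l := by rw [hm_def, if_neg hb]
      have := hple k (by omega)
      omega
  set Df : ℕ → ℕ := fun k => if k < m then min (lam.part k + 1) ((conj lam).part k) else 0
    with hDf
  set Af : ℕ → ℕ := fun k => if k < m then min (lam.part k) ((conj lam).part k - 1) else 0
    with hAf
  obtain ⟨D, hD⟩ : ∃ D : Ptn, ∀ k, D.part k = Df k := by
    refine ⟨⟨Df, antitone_nat_of_succ_le ?_, m, fun n hn => ?_⟩, fun _ => rfl⟩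
    · intro k
      have e1 := lam.anti (Nat.le_add_right k 1)
      have e2 := (conj lam).anti (Nat.le_add_right k 1)
      simp only [hDf]
      split_ifs <;> omega
    · simp only [hDf]
      split_ifs <;> omega
  obtain ⟨A, hA⟩ : ∃ A : Ptn, ∀ k, A.part k = Af k := by
    refine ⟨⟨Af, antitone_nat_of_succ_le ?_, m, fun n hn => ?_⟩, fun _ => rfl⟩
    · intro k
      have e1 := lam.anti (Nat.le_add_right k 1)
      have e2 := (conj lam).anti (Nat.le_add_right k 1)
      simp only [hAf]
      split_ifs <;> omega
    · simp only [hAf]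
      split_ifs <;> omega
  have hconjD_le : ∀ k, (conj D).part k ≤ m := by
    intro k
    apply le_of_lt_imp
    intro i hi
    rw [conj_lt_iff, hD] at hi
    by_contra hc
    simp only [hDf, if_neg (by omega : ¬ i < m)] at hi
    omega
  have hconjA_le : ∀ k, (conj A).part k ≤ m := by
    intro k
    apply le_of_lt_imp
    intro i hi
    rw [conj_lt_iff, hA] at hi
    by_contra hc
    simp only [hAf, if_neg (by omega : ¬ i < m)] at hi
    omega
  refine ⟨union A (conj D), ?_, ?_, ?_⟩
  · -- Asym1
    intro k hk
    have hν : ∀ j, (union A (conj D)).part j = max (A.part j) ((conj D).part j) :=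
      fun _ => rfl
    rw [hν] at hk ⊢
    by_cases hkm : k < m
    · have hAval : A.part k = min (lam.part k) ((conj lam).part k - 1) := by
        rw [hA]; simp only [hAf, if_pos hkm]
      have hc1 := hcm1 k hkm
      have hAge : m ≤ A.part k := by
        have := hlge k (by omega); omega
      have hνk : max (A.part k) ((conj D).part k) = A.part k := by
        have := hconjD_le k; omega
      rw [hνk, conj_union_part, conj_conj_part, hD]
      have hDval : Df k = min (lam.part k + 1) ((conj lam).part k) := by
        simp only [hDf, if_pos hkm]
      have hconjA' := hconjA_le k
      have hlk := hlge k (by omega)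
      rw [hDval, hAval]
      omega
    · exfalso
      have : A.part k = 0 := by rw [hA]; simp only [hAf, if_neg hkm]
      have := hconjD_le k
      omega
  · -- mu ⊆ lam
    intro k
    show max (A.part k) ((conj D).part k) ≤ lam.part k
    have e1 : A.part k ≤ lam.part k := by
      rw [hA]; simp only [hAf]; split_ifs <;> omega
    have e2 : (conj D).part k ≤ lam.part k := by
      apply le_of_lt_imp
      intro j hj
      rw [conj_lt_iff, hD] at hj
      have hjm : j < m := by
        by_contra hc
        simp only [hDf, if_neg hc] at hj
        omega
      have : k < (conj lam).part j := by
        simp only [hDf, if_pos hjm] at hj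
        omega
      exact (conj_lt_iff lam j k).mp this
    omega
  · -- lam_k ≤ mu_k + 1
    intro k
    show lam.part k ≤ max (A.part k) ((conj D).part k) + 1
    by_cases hkm : k < m
    · have hAval : A.part k = min (lam.part k) ((conj lam).part k - 1) := by
        rw [hA]; simp only [hAf, if_pos hkm]
      have e1 : lam.part k ≤ (conj lam).part k := h1 k (by omega)
      have hc1 := hcm1 k hkm
      omega
    · have key : lam.part k - 1 ≤ (conj D).part k := by
        apply le_of_lt_imp
        intro j hj
        have hjk : j + 1 < lam.part k := by omega
        obtain ⟨hkl, hkm1⟩ := hlam_m k (by omega)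
        have hjm : j < m := by omega
        have hj2 : j + 2 ≤ l := by omega
        have e1 : k < (conj lam).part (j + 1) := (conj_lt_iff lam (j + 1) k).mpr hjk
        have e2 : (conj lam).part (j + 1) ≤ (conj lam).part j :=
          (conj lam).anti (Nat.le_add_right j 1)
        have e3 := h2 j hj2
        rw [conj_lt_iff, hD]
        simp only [hDf, if_pos hjm]
        omega
      omega

lemma frobA_strict (lam : Ptn) {j : ℕ} (hj : 1 ≤ j) : frobA lam (j + 1) < frobA lam j := by
  unfold frobA
  have h := lam.anti (show j - 1 ≤ (j + 1) - 1 by omega)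
  simp only [Nat.add_sub_cancel] at *
  push_cast
  omega

lemma frobB_strict (lam : Ptn) {j : ℕ} (hj : 1 ≤ j) : frobB lam (j + 1) < frobB lam j := by
  unfold frobB
  have h := (conj lam).anti (show j - 1 ≤ (j + 1) - 1 by omega)
  simp only [Nat.add_sub_cancel] at *
  push_cast
  omega

lemma count_lemma (lam : Ptn) (h : Interlaces lam) :
    Set.ncard {i : ℕ | 1 ≤ i ∧ i ≤ durfee lam ∧
        (i = 1 ∨ frobB lam i < frobA lam (i - 1)) ∧ frobA lam i < frobB lam i} =
    Set.ncard {i : ℕ | 1 ≤ i ∧ i ≤ durfee lam ∧ frobA lam i < frobB lam i ∧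
        (i = durfee lam ∨ frobB lam (i + 1) < frobA lam i)} := by
  obtain ⟨hI1, hI2⟩ := h
  set l := durfee lam with hl
  set S := {i : ℕ | 1 ≤ i ∧ i ≤ l ∧
      (i = 1 ∨ frobB lam i < frobA lam (i - 1)) ∧ frobA lam i < frobB lam i} with hS
  set T := {i : ℕ | 1 ≤ i ∧ i ≤ l ∧ frobA lam i < frobB lam i ∧
      (i = l ∨ frobB lam (i + 1) < frobA lam i)} with hT
  set I := {i : ℕ | 1 ≤ i ∧ i ≤ l ∧ frobA lam i < frobB lam i} with hI
  have hIfin : I.Finite := (Set.finite_Icc 1 l).subset (fun i hi => ⟨hi.1, hi.2.1⟩)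
  have hSsub : S ⊆ I := fun i hi => ⟨hi.1, hi.2.1, hi.2.2.2⟩
  have hTsub : T ⊆ I := fun i hi => ⟨hi.1, hi.2.1, hi.2.2.1⟩
  have key : I \ S = (fun i => i + 1) '' (I \ T) := by
    ext i
    simp only [Set.mem_diff, Set.mem_image, hS, hT, hI, Set.mem_setOf_eq]
    constructor
    · rintro ⟨⟨hi1, hil, hab⟩, hnS⟩
      have h3 : ¬(i = 1 ∨ frobB lam i < frobA lam (i - 1)) :=
        fun hx => hnS ⟨hi1, hil, hx, hab⟩
      push_neg at h3
      obtain ⟨hne1, hle⟩ := h3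
      have hi2 : 2 ≤ i := by omega
      have heq : frobB lam i = frobA lam (i - 1) := by
        have h' := hI2 (i - 1) (by omega) (by omega)
        rw [show i - 1 + 1 = i by omega] at h'
        omega
      refine ⟨i - 1, ⟨⟨by omega, by omega, ?_⟩, ?_⟩, by omega⟩
      · have hstr : frobB lam ((i - 1) + 1) < frobB lam (i - 1) := frobB_strict lam (by omega)
        rw [show i - 1 + 1 = i by omega] at hstr
        omega
      · rintro ⟨-, -, -, hT4⟩
        rcases hT4 with h' | h'
        · omega
        · rw [show i - 1 + 1 = i by omega] at h'
          omega
    · rintro ⟨j, ⟨⟨hj1, hjl, hab⟩, hnT⟩, rfl⟩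
      have h4 : ¬(j = l ∨ frobB lam (j + 1) < frobA lam j) :=
        fun hx => hnT ⟨hj1, hjl, hab, hx⟩
      push_neg at h4
      obtain ⟨hnel, hle⟩ := h4
      have heq : frobB lam (j + 1) = frobA lam j := by
        have h' := hI2 j (by omega) (by omega)
        omega
      refine ⟨⟨by omega, by omega, ?_⟩, ?_⟩
      · have := frobA_strict lam hj1
        omega
      · rintro ⟨-, -, hS3, -⟩
        rcases hS3 with h' | h'
        · omega
        · rw [show j + 1 - 1 = j by omega] at h'
          omega
  have hd : (I \ S).ncard = (I \ T).ncard := by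
    rw [key, Set.ncard_image_of_injective _ (add_left_injective 1)]
  have eS : S.ncard = I.ncard - (I \ S).ncard := by
    conv_lhs => rw [← Set.diff_diff_cancel_left hSsub]
    rw [Set.ncard_diff Set.diff_subset (hIfin.subset Set.diff_subset)]
  have eT : T.ncard = I.ncard - (I \ T).ncard := by
    conv_lhs => rw [← Set.diff_diff_cancel_left hTsub]
    rw [Set.ncard_diff Set.diff_subset (hIfin.subset Set.diff_subset)]
  rw [eS, eT, hd]

end Ptn

open Ptn in
/-- Let `lam` have Frobenius notation `(a₁,…,a_l | b₁,…,b_l)`.  There exists a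
`1`-asymmetric partition `ν` with `lam ≺ ν` iff there exists a `1`-asymmetric
partition `μ` with `μ ≺' lam`, and both are equivalent to the interlacing
condition `b₁ ≥ a₁ ≥ b₂ ≥ ⋯ ≥ b_l ≥ a_l`.  Moreover, when this condition
holds, `#{i : a_{i-1} > b_i > a_i} = #{i : b_{i+1} < a_i < b_i}` (with
`a₀ = ∞`, `b_{l+1} = -1`; the boundary cases are encoded by the disjunctions
`i = 1` and `i = l`). -/
theorem one_asymmetric_structure (lam : Ptn) :
    ((∃ ν : Ptn, Asym1 ν ∧ HStrip lam ν) ↔ Interlaces lam) ∧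
    ((∃ mu : Ptn, Asym1 mu ∧ VStrip mu lam) ↔ Interlaces lam) ∧
    (Interlaces lam →
      Set.ncard {i : ℕ | 1 ≤ i ∧ i ≤ durfee lam ∧
          (i = 1 ∨ frobB lam i < frobA lam (i - 1)) ∧ frobA lam i < frobB lam i} =
      Set.ncard {i : ℕ | 1 ≤ i ∧ i ≤ durfee lam ∧ frobA lam i < frobB lam i ∧
          (i = durfee lam ∨ frobB lam (i + 1) < frobA lam i)}) := by
  exact ⟨⟨dirA lam, dirA' lam⟩, ⟨dirB lam, dirB' lam⟩, count_lemma lam⟩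
end
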